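/- arXiv:1101.0478 — 2 statements merged into one kernel-verified Lean document; each statement's English description precedes it below -/
import Mathlib

section
/- For every c > 0 there exists a constant C > 0 such that Σ_{k=0}^∞ |Γ_k(λ)| e^{−2kt} ≤ C for all real λ and all t ≥ c; in particular the Harish-Chandra series Σ_{k=0}^∞ Γ_k(λ) e^{−2kt} converges absolutely, with a bound uniform in λ ∈ ℝ and t ≥ c. -/
/-!
Put `S_k = ∑_{j ≤ k} |Γ_j(λ)|`. Since `|k + 1 - iλ|` dominates both `k + 1` and `|λ|`, every
coefficient `ρ + 2j - iλ` with `j ≤ k` on the right of the recursion is at most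
`(|ρ| + 3) |k + 1 - iλ|`; dividing the recursion by `(k + 1) |k + 1 - iλ|` gives
`|Γ_{k+1}(λ)| ≤ c' S_k / (k + 1)` with `c'` independent of `λ`. Hence
`S_k ≤ ∏_{j < k} (1 + c' / (j + 1))`, a sequence whose consecutive ratios tend to `1`, so by the
ratio test it is summable against `e^{-2kc}`, which dominates `e^{-2kt}` for `t ≥ c`.
-/

open Finset Complex Filter Topology

theorem sum_range_le_prod_of_le_div_mul_sum {u : ℕ → ℝ} {c : ℝ} (hc : 0 ≤ c) (h0 : u 0 ≤ 1)
    (hstep : ∀ k : ℕ, u (k + 1) ≤ c / (k + 1) * ∑ j ∈ range (k + 1), u j) (k : ℕ) :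
    ∑ j ∈ range (k + 1), u j ≤ ∏ j ∈ range k, (1 + c / (j + 1)) := by
  induction k with
  | zero => simpa using h0
  | succ k ih =>
    calc ∑ j ∈ range (k + 2), u j
        = ∑ j ∈ range (k + 1), u j + u (k + 1) := sum_range_succ _ _
      _ ≤ (1 + c / (k + 1)) * ∑ j ∈ range (k + 1), u j := by linarith [hstep k]
      _ ≤ (1 + c / (k + 1)) * ∏ j ∈ range k, (1 + c / (j + 1)) :=
          mul_le_mul_of_nonneg_left ih (by positivity)
      _ = ∏ j ∈ range (k + 1), (1 + c / (j + 1)) := by rw [prod_range_succ, mul_comm]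

theorem summable_prod_one_add_div_mul_pow {c r : ℝ} (hc : 0 ≤ c) (hr₀ : 0 < r) (hr₁ : r < 1) :
    Summable fun k : ℕ => (∏ j ∈ range k, (1 + c / (j + 1))) * r ^ k := by
  have hpos : ∀ k : ℕ, 0 < (∏ j ∈ range k, (1 + c / (j + 1))) * r ^ k := fun k => by positivity
  refine summable_of_ratio_test_tendsto_lt_one hr₁ (.of_forall fun k => (hpos k).ne') ?_
  have hratio : ∀ k : ℕ, ‖(∏ j ∈ range (k + 1), (1 + c / (j + 1))) * r ^ (k + 1)‖ /
      ‖(∏ j ∈ range k, (1 + c / (j + 1))) * r ^ k‖ = (1 + c * (1 / ((k : ℝ) + 1))) * r := by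
    intro k
    rw [Real.norm_of_nonneg (hpos _).le, Real.norm_of_nonneg (hpos _).le, div_eq_iff (hpos k).ne',
      prod_range_succ, pow_succ]
    ring
  simp_rw [hratio]
  simpa using ((tendsto_one_div_add_atTop_nhds_zero_nat.const_mul c).const_add 1).mul_const r

theorem norm_add_two_mul_sub_I_mul_le (z : ℂ) (l : ℝ) {m k : ℕ} (hmk : m ≤ k) :
    ‖z + 2 * m - I * l‖ ≤ (‖z‖ + 3) * ‖(k : ℂ) + 1 - I * l‖ := by
  set w : ℂ := (k : ℂ) + 1 - I * l
  have hre : (k : ℝ) + 1 ≤ ‖w‖ := by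
    simpa [w, abs_of_nonneg (by positivity : (0 : ℝ) ≤ k + 1)] using abs_re_le_norm w
  have him : |l| ≤ ‖w‖ := by simpa [w] using abs_im_le_norm w
  have hm : (m : ℝ) ≤ k := by exact_mod_cast hmk
  calc ‖z + 2 * m - I * l‖ ≤ ‖z‖ + 2 * m + |l| := by
        refine (norm_sub_le _ _).trans ?_
        simp only [norm_mul, norm_I, one_mul, norm_real, Real.norm_eq_abs]
        refine add_le_add_left ((norm_add_le _ _).trans ?_) _
        simp
    _ ≤ (‖z‖ + 3) * ‖w‖ := by nlinarith [norm_nonneg z]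

theorem norm_sum_add_two_mul_sub_I_mul_le (z : ℂ) (l : ℝ) (g : ℕ → ℂ) {k : ℕ} {s : Finset ℕ}
    (hs : s ⊆ range (k + 1)) :
    ‖∑ m ∈ s, (z + 2 * m - I * l) * g m‖ ≤
      (‖z‖ + 3) * ‖(k : ℂ) + 1 - I * l‖ * ∑ m ∈ range (k + 1), ‖g m‖ := by
  calc ‖∑ m ∈ s, (z + 2 * m - I * l) * g m‖
      ≤ ∑ m ∈ s, (‖z‖ + 3) * ‖(k : ℂ) + 1 - I * l‖ * ‖g m‖ := by
        refine (norm_sum_le _ _).trans (sum_le_sum fun m hm => ?_)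
        rw [norm_mul]
        have hmk : m ≤ k := Nat.lt_succ_iff.mp (mem_range.mp (hs hm))
        gcongr
        exact norm_add_two_mul_sub_I_mul_le z l hmk
    _ ≤ ∑ m ∈ range (k + 1), (‖z‖ + 3) * ‖(k : ℂ) + 1 - I * l‖ * ‖g m‖ :=
        sum_le_sum_of_subset_of_nonneg hs fun _ _ _ => by positivity
    _ = _ := (mul_sum _ _ _).symm

theorem sum_Icc_comp_sub_two_mul {M : Type*} [AddCommMonoid M] (f : ℕ → M) (n : ℕ) :
    ∑ j ∈ Icc 1 (n / 2), f (n - 2 * j) = ∑ m ∈ (Icc 1 (n / 2)).image (n - 2 * ·), f m := by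
  rw [sum_image]
  intro x hx y hy h
  simp only [coe_Icc, Set.mem_Icc] at hx hy h
  omega

theorem image_Icc_sub_two_mul_subset_range (k : ℕ) :
    (Icc 1 ((k + 1) / 2)).image (k + 1 - 2 * ·) ⊆ range (k + 1) := by
  intro m hm
  simp only [mem_image, mem_Icc, mem_range] at hm ⊢
  omega

theorem norm_succ_le_div_mul_sum (α β : ℝ) (G : ℕ → ℝ → ℂ)
    (hrec : ∀ (k : ℕ) (l : ℝ),
      ((k : ℂ) + 1) * ((k : ℂ) + 1 - I * l) * G (k + 1) l =
        ((α : ℂ) - (β : ℂ)) *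
            ∑ j ∈ range (k + 1), (((α : ℂ) + (β : ℂ) + 1) + 2 * (j : ℂ) - I * l) * G j l +
          ((β : ℂ) + 1 / 2) *
            ∑ j ∈ Icc 1 ((k + 1) / 2),
              (((α : ℂ) + (β : ℂ) + 1) + 2 * ((k + 1 - 2 * j : ℕ) : ℂ) - I * l) *
                G (k + 1 - 2 * j) l)
    (k : ℕ) (l : ℝ) :
    ‖G (k + 1) l‖ ≤
      (‖(α : ℂ) - β‖ + ‖(β : ℂ) + 1 / 2‖) * (‖(α : ℂ) + β + 1‖ + 3) / (k + 1) *
        ∑ j ∈ range (k + 1), ‖G j l‖ := by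
  set w : ℂ := (k : ℂ) + 1 - I * l
  set B := (‖(α : ℂ) + β + 1‖ + 3) * ‖w‖ * ∑ j ∈ range (k + 1), ‖G j l‖
  have hw : (k : ℝ) + 1 ≤ ‖w‖ := by
    simpa [w, abs_of_nonneg (by positivity : (0 : ℝ) ≤ k + 1)] using abs_re_le_norm w
  have hfirst := norm_sum_add_two_mul_sub_I_mul_le ((α : ℂ) + β + 1) l (G · l)
    (subset_refl (range (k + 1)))
  have hsecond := norm_sum_add_two_mul_sub_I_mul_le ((α : ℂ) + β + 1) l (G · l)
    (image_Icc_sub_two_mul_subset_range k)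
  rw [← sum_Icc_comp_sub_two_mul (fun m => ((α : ℂ) + β + 1 + 2 * m - I * l) * G m l)] at hsecond
  have hnorm : ((k : ℝ) + 1) * ‖w‖ * ‖G (k + 1) l‖ ≤
      (‖(α : ℂ) - β‖ + ‖(β : ℂ) + 1 / 2‖) * B := by
    have hlhs : ‖((k : ℂ) + 1) * w * G (k + 1) l‖ = ((k : ℝ) + 1) * ‖w‖ * ‖G (k + 1) l‖ := by
      rw [norm_mul, norm_mul]; norm_cast
    rw [← hlhs, hrec k l]
    refine (norm_add_le _ _).trans ((add_le_add ?_ ?_).trans_eq (add_mul _ _ _).symm) <;>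
      rw [norm_mul] <;> gcongr
  rw [div_mul_eq_mul_div, le_div_iff₀ (by positivity)]
  have hwpos : 0 < ‖w‖ := by linarith
  nlinarith

theorem stmt9_general (α β : ℝ)
    (G : ℕ → ℝ → ℂ) (h0 : ∀ l : ℝ, G 0 l = 1)
    (hrec : ∀ (k : ℕ) (l : ℝ),
      ((k : ℂ) + 1) * ((k : ℂ) + 1 - Complex.I * l) * G (k + 1) l =
        ((α : ℂ) - (β : ℂ)) *
            ∑ j ∈ Finset.range (k + 1),
              (((α : ℂ) + (β : ℂ) + 1) + 2 * (j : ℂ) - Complex.I * l) * G j l +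
          ((β : ℂ) + 1 / 2) *
            ∑ j ∈ Finset.Icc 1 ((k + 1) / 2),
              (((α : ℂ) + (β : ℂ) + 1) + 2 * ((k + 1 - 2 * j : ℕ) : ℂ) - Complex.I * l) *
                G (k + 1 - 2 * j) l) :
    ∀ c : ℝ, 0 < c → ∃ C : ℝ, 0 < C ∧
      ∀ (l : ℝ) (t : ℝ), c ≤ t →
        Summable (fun k : ℕ => ‖G k l‖ * Real.exp (-2 * k * t)) ∧
          ∑' k : ℕ, ‖G k l‖ * Real.exp (-2 * k * t) ≤ C := by
  intro c hc
  set c' := (‖(α : ℂ) - β‖ + ‖(β : ℂ) + 1 / 2‖) * (‖(α : ℂ) + β + 1‖ + 3)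
  set P : ℕ → ℝ := fun k => ∏ j ∈ range k, (1 + c' / (j + 1))
  have hc' : 0 ≤ c' := by positivity
  have hG : ∀ l k, ‖G k l‖ ≤ P k := fun l k =>
    (single_le_sum (fun j _ => norm_nonneg (G j l)) (self_mem_range_succ k)).trans <|
      sum_range_le_prod_of_le_div_mul_sum hc' (by simp [h0])
        (norm_succ_le_div_mul_sum α β G hrec · l) k
  have hsum := summable_prod_one_add_div_mul_pow hc' (Real.exp_pos (-2 * c))
    (Real.exp_lt_one_iff.mpr (by linarith))
  refine ⟨∑' k, P k * Real.exp (-2 * c) ^ k,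
    hsum.tsum_pos (fun k => by positivity) 0 (by simp), fun l t ht => ?_⟩
  have hterm : ∀ k : ℕ, ‖G k l‖ * Real.exp (-2 * k * t) ≤ P k * Real.exp (-2 * c) ^ k := by
    intro k
    have hexp : Real.exp (-2 * k * t) ≤ Real.exp (-2 * c) ^ k := by
      rw [← Real.exp_nat_mul, Real.exp_le_exp]
      nlinarith [(Nat.cast_nonneg k : (0 : ℝ) ≤ k)]
    exact mul_le_mul (hG l k) hexp (Real.exp_pos _).le ((norm_nonneg _).trans (hG l k))
  have hsummable := hsum.of_nonneg_of_le (fun k => by positivity) hterm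
  exact ⟨hsummable, hsummable.tsum_le_tsum hterm hsum⟩

theorem stmt9 (α β : ℝ) (hβα : β < α) (hβ : -(1/2 : ℝ) < β)
    (G : ℕ → ℝ → ℂ) (h0 : ∀ l : ℝ, G 0 l = 1)
    (hrec : ∀ (k : ℕ) (l : ℝ),
      ((k : ℂ) + 1) * ((k : ℂ) + 1 - Complex.I * l) * G (k + 1) l =
        ((α : ℂ) - (β : ℂ)) *
            ∑ j ∈ Finset.range (k + 1),
              (((α : ℂ) + (β : ℂ) + 1) + 2 * (j : ℂ) - Complex.I * l) * G j l +
          ((β : ℂ) + 1 / 2) *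
            ∑ j ∈ Finset.Icc 1 ((k + 1) / 2),
              (((α : ℂ) + (β : ℂ) + 1) + 2 * ((k + 1 - 2 * j : ℕ) : ℂ) - Complex.I * l) *
                G (k + 1 - 2 * j) l) :
    ∀ c : ℝ, 0 < c → ∃ C : ℝ, 0 < C ∧
      ∀ (l : ℝ) (t : ℝ), c ≤ t →
        Summable (fun k : ℕ => ‖G k l‖ * Real.exp (-2 * k * t)) ∧
          ∑' k : ℕ, ‖G k l‖ * Real.exp (-2 * k * t) ≤ C :=
  stmt9_general α β G h0 hrec
end

section
/- Let 1 < p < ∞ and define, for measurable f on (0,1], the operator T f(t) = t^{−(α+1/2)} ∫₀^1 r^{−(α+1/2)} |f(r)| Δ(r) dr for t ∈ (0,1]. Then there exists a constant C > 0 with ‖T f‖_{L^p((0,1],dμ)} ≤ C ‖f‖_{L^p((0,1],dμ)} for all f ∈ L^p((0,1],dμ) if and only if p₀ < p < p₁. -/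
open MeasureTheory Real Set

/-- The Jacobi weight `Δ(t) = (2 sinh t)^(2α+1) (2 cosh t)^(2β+1)`. -/
noncomputable def Δj (α β : ℝ) (t : ℝ) : ℝ :=
  (2 * Real.sinh t) ^ (2 * α + 1) * (2 * Real.cosh t) ^ (2 * β + 1)

/-- The measure `dμ = Δ(t) dt`. -/
noncomputable def μj (α β : ℝ) : Measure ℝ :=
  MeasureTheory.volume.withDensity fun t => ENNReal.ofReal (Δj α β t)

/-!
The operator is rank one: with `g t = t ^ (-(α + 1/2))` we have `T f = (∫ g |f| dμ) • g`, so
`‖T f‖_p = ‖g‖_p ∫ g |f| dμ`. By Hölder's inequality and its converse (tested on truncations of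
Hölder's extremal function `g ^ (q - 1)`), this is bounded on `L^p` exactly when `g ∈ L^p ∩ L^q`,
`q` the conjugate exponent. Near `0` the weight satisfies `Δ(t) ≍ t ^ (2α + 1)`, so `g ^ r` is
`μ`-integrable on `(0, 1]` iff `(α + 1/2) r < 2α + 2`: for `r = p` this is `p < p₁`, for `r = q`
it is `p₀ < p`.
-/

open scoped ENNReal

namespace ENNReal

theorem le_rpow_of_le_mul_rpow {p q : ℝ} (hpq : p.HolderConjugate q) {M C : ℝ≥0∞}
    (hM : M ≠ ∞) (h : M ≤ C * M ^ (1 / p)) : M ≤ C ^ q := by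
  rcases eq_or_ne M 0 with rfl | hM0
  · exact zero_le
  have hsplit : M = M ^ (1 / q) * M ^ (1 / p) := by
    rw [← ENNReal.rpow_add _ _ hM0 hM, one_div, one_div, hpq.symm.inv_add_inv_eq_one,
      ENNReal.rpow_one]
  have hMq : M ^ (1 / q) ≤ C := by
    refine (ENNReal.mul_le_mul_iff_left ?_ ?_).mp (hsplit.symm.trans_le h)
    · simp [hM0, hM]
    · simp [hM, hpq.pos.le]
  calc M = (M ^ (1 / q)) ^ q := by
        rw [← ENNReal.rpow_mul, one_div_mul_cancel hpq.symm.ne_zero, ENNReal.rpow_one]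
    _ ≤ C ^ q := ENNReal.rpow_le_rpow hMq hpq.symm.nonneg

end ENNReal

theorem Real.HolderConjugate.lt_iff_lt {p q r s : ℝ} (hpq : p.HolderConjugate q)
    (hrs : r.HolderConjugate s) : q < r ↔ s < p := by
  rw [← inv_lt_inv₀ hrs.pos hpq.symm.pos, ← hpq.one_sub_inv, ← hrs.symm.one_sub_inv,
    sub_lt_sub_iff_left, inv_lt_inv₀ hpq.pos hrs.symm.pos]

namespace MeasureTheory

variable {X : Type*} [MeasurableSpace X] {ν : Measure X} {p q : ℝ}

theorem lintegral_mul_ofReal_abs_le (hpq : p.HolderConjugate q) {g : X → ℝ≥0∞}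
    (hg : AEMeasurable g ν) {f : X → ℝ} (hf : AEStronglyMeasurable f ν) :
    ∫⁻ x, g x * ENNReal.ofReal |f x| ∂ν ≤
      (∫⁻ x, g x ^ q ∂ν) ^ (1 / q) * eLpNorm f (ENNReal.ofReal p) ν := by
  have hnorm : eLpNorm f (ENNReal.ofReal p) ν = (∫⁻ x, ENNReal.ofReal |f x| ^ p ∂ν) ^ (1 / p) := by
    rw [eLpNorm_eq_lintegral_rpow_enorm_toReal (by simp [hpq.pos]) ENNReal.ofReal_ne_top,
      ENNReal.toReal_ofReal hpq.nonneg]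
    simp_rw [Real.enorm_eq_ofReal_abs]
  rw [hnorm]
  exact ENNReal.lintegral_mul_le_Lp_mul_Lq ν hpq.symm hg hf.aemeasurable.abs.ennreal_ofReal

theorem lintegral_rpow_le_of_forall_lintegral_mul_le_of_le (hpq : p.HolderConjugate q)
    {g h : X → ℝ≥0∞} (hh : Measurable h) (hhg : h ≤ g) (hh_top : ∀ x, h x ≠ ∞)
    (hfin : ∫⁻ x, h x ^ q ∂ν ≠ ∞) {C : ℝ≥0∞}
    (hC : ∀ f : X → ℝ, MemLp f (ENNReal.ofReal p) ν →
      ∫⁻ x, g x * ENNReal.ofReal |f x| ∂ν ≤ C * eLpNorm f (ENNReal.ofReal p) ν) :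
    ∫⁻ x, h x ^ q ∂ν ≤ C ^ q := by
  have hq1 : 0 ≤ q - 1 := hpq.symm.sub_one_pos.le
  set f : X → ℝ := fun x => (h x ^ (q - 1)).toReal
  have hf_abs : ∀ x, ENNReal.ofReal |f x| = h x ^ (q - 1) := fun x => by
    simp [f, hh_top x, hpq.symm.lt.le]
  have hf_norm : eLpNorm f (ENNReal.ofReal p) ν = (∫⁻ x, h x ^ q ∂ν) ^ (1 / p) := by
    rw [eLpNorm_eq_lintegral_rpow_enorm_toReal (by simp [hpq.pos]) ENNReal.ofReal_ne_top,
      ENNReal.toReal_ofReal hpq.nonneg]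
    congr 2 with x
    rw [← ofReal_norm, Real.norm_eq_abs, hf_abs, ← ENNReal.rpow_mul,
      hpq.symm.sub_one_mul_conj]
  have hf_mem : MemLp f (ENNReal.ofReal p) ν :=
    ⟨((hh.pow_const _).ennreal_toReal).aestronglyMeasurable, by
      rw [hf_norm]; exact ENNReal.rpow_lt_top_of_nonneg (by simp [hpq.pos.le]) hfin⟩
  have hf_test : ∫⁻ x, h x ^ q ∂ν ≤ ∫⁻ x, g x * ENNReal.ofReal |f x| ∂ν :=
    lintegral_mono fun x => by
      rw [hf_abs]
      calc h x ^ q = h x * h x ^ (q - 1) := by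
            simpa using ENNReal.rpow_add_of_nonneg (x := h x) 1 (q - 1) zero_le_one hq1
        _ ≤ g x * h x ^ (q - 1) := by gcongr; exact hhg x
  exact ENNReal.le_rpow_of_le_mul_rpow hpq hfin (hf_test.trans (hf_norm ▸ hC f hf_mem))

theorem lintegral_rpow_le_of_forall_lintegral_mul_le [IsFiniteMeasure ν]
    (hpq : p.HolderConjugate q) {g : X → ℝ≥0∞} (hg : Measurable g) {C : ℝ≥0∞}
    (hC : ∀ f : X → ℝ, MemLp f (ENNReal.ofReal p) ν →
      ∫⁻ x, g x * ENNReal.ofReal |f x| ∂ν ≤ C * eLpNorm f (ENNReal.ofReal p) ν) :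
    ∫⁻ x, g x ^ q ∂ν ≤ C ^ q := by
  have htrunc (n : ℕ) : ∫⁻ x, min (g x) n ^ q ∂ν ≤ C ^ q := by
    refine lintegral_rpow_le_of_forall_lintegral_mul_le_of_le hpq (hg.min measurable_const)
      (fun x => min_le_left _ _) (fun x => ((min_le_right _ _).trans_lt (by simp)).ne) ?_ hC
    refine ((lintegral_mono fun x => ?_).trans_lt
      (lintegral_const_lt_top (ENNReal.rpow_ne_top_of_nonneg hpq.symm.nonneg
        (ENNReal.natCast_ne_top n)))).ne
    exact ENNReal.rpow_le_rpow (min_le_right _ _) hpq.symm.nonneg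
  have hsup (x : X) : g x ^ q = ⨆ n : ℕ, min (g x) n ^ q := by
    conv_lhs => rw [← inf_top_eq (g x), ← ENNReal.iSup_natCast, inf_iSup_eq]
    exact (ENNReal.orderIsoRpow q hpq.symm.pos).map_iSup _
  have hmono : Monotone fun (n : ℕ) (x : X) => min (g x) n ^ q := fun m n hmn x =>
    ENNReal.rpow_le_rpow (min_le_min_left _ (by exact_mod_cast hmn)) hpq.symm.nonneg
  calc ∫⁻ x, g x ^ q ∂ν = ⨆ n : ℕ, ∫⁻ x, min (g x) n ^ q ∂ν := by
        simp_rw [hsup]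
        exact lintegral_iSup (fun n => (hg.min measurable_const).pow_const q) hmono
    _ ≤ C ^ q := iSup_le htrunc

theorem lintegral_ne_zero_of_ae_pos (hν : ν ≠ 0) {f : X → ℝ≥0∞} (hf : AEMeasurable f ν)
    (hpos : ∀ᵐ x ∂ν, 0 < f x) : ∫⁻ x, f x ∂ν ≠ 0 := by
  rw [Ne, lintegral_eq_zero_iff' hf]
  intro hzero
  refine hν (ae_eq_bot.mp (Filter.eventually_false_iff_eq_bot.mp ?_))
  filter_upwards [hpos, hzero] with x hx hx0
  exact hx.ne' hx0

theorem lintegral_mul_const_rpow_one_div (hp : 0 < p) {G : X → ℝ≥0∞} (hG : Measurable G)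
    (c : ℝ≥0∞) :
    (∫⁻ x, (G x * c) ^ p ∂ν) ^ (1 / p) = (∫⁻ x, G x ^ p ∂ν) ^ (1 / p) * c := by
  simp_rw [ENNReal.mul_rpow_of_nonneg _ _ hp.le]
  rw [lintegral_mul_const _ (hG.pow_const p), ENNReal.mul_rpow_of_nonneg _ _ (by positivity),
    ← ENNReal.rpow_mul, mul_one_div_cancel hp.ne', ENNReal.rpow_one]

theorem exists_bound_rankOne_iff [IsFiniteMeasure ν] (hν : ν ≠ 0) (hpq : p.HolderConjugate q)
    {G : X → ℝ≥0∞} (hG : Measurable G) (hG_pos : ∀ᵐ x ∂ν, 0 < G x) :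
    (∃ C : ℝ, 0 < C ∧ ∀ f : X → ℝ, MemLp f (ENNReal.ofReal p) ν →
      (∫⁻ x, (G x * ∫⁻ y, G y * ENNReal.ofReal |f y| ∂ν) ^ p ∂ν) ^ (1 / p) ≤
        ENNReal.ofReal C * eLpNorm f (ENNReal.ofReal p) ν) ↔
      ∫⁻ x, G x ^ p ∂ν ≠ ∞ ∧ ∫⁻ x, G x ^ q ∂ν ≠ ∞ := by
  simp_rw [lintegral_mul_const_rpow_one_div hpq.pos hG]
  set N := (∫⁻ x, G x ^ p ∂ν) ^ (1 / p)
  constructor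
  · rintro ⟨C, -, hC⟩
    have hN_top : N ≠ ∞ := by
      have hone := hC 1 (memLp_const 1)
      simp only [Pi.one_apply, abs_one, ENNReal.ofReal_one, mul_one] at hone
      have hI : ∫⁻ x, G x ∂ν ≠ 0 := lintegral_ne_zero_of_ae_pos hν hG.aemeasurable hG_pos
      intro hN
      rw [hN, ENNReal.top_mul hI] at hone
      exact ENNReal.mul_ne_top ENNReal.ofReal_ne_top (memLp_const 1).eLpNorm_ne_top
        (top_le_iff.mp hone)
    have hA : ∫⁻ x, G x ^ p ∂ν ≠ ∞ := fun h =>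
      hN_top ((ENNReal.rpow_eq_top_iff_of_pos (by simp [hpq.pos])).mpr h)
    have hN0 : N ≠ 0 := by
      have hA0 : ∫⁻ x, G x ^ p ∂ν ≠ 0 := lintegral_ne_zero_of_ae_pos hν
        (hG.pow_const p).aemeasurable
        (hG_pos.mono fun x hx => ENNReal.rpow_pos_of_nonneg hx hpq.nonneg)
      simp [N, hA0, hA]
    refine ⟨hA, ne_top_of_le_ne_top ?_ (lintegral_rpow_le_of_forall_lintegral_mul_le hpq hG
      (C := ENNReal.ofReal C / N) fun f hf => ?_)⟩
    · exact ENNReal.rpow_ne_top_of_nonneg hpq.symm.nonneg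
        (ENNReal.div_ne_top ENNReal.ofReal_ne_top hN0)
    · rw [← ENNReal.mul_div_right_comm, ENNReal.le_div_iff_mul_le (Or.inl hN0) (Or.inl hN_top),
        mul_comm]
      exact hC f hf
  · rintro ⟨hA, hB⟩
    refine ⟨(N * (∫⁻ x, G x ^ q ∂ν) ^ (1 / q)).toReal + 1, by positivity, fun f hf => ?_⟩
    calc N * ∫⁻ y, G y * ENNReal.ofReal |f y| ∂ν
        ≤ N * ((∫⁻ x, G x ^ q ∂ν) ^ (1 / q) * eLpNorm f (ENNReal.ofReal p) ν) := by
          gcongr; exact lintegral_mul_ofReal_abs_le hpq hG.aemeasurable hf.1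
      _ = N * (∫⁻ x, G x ^ q ∂ν) ^ (1 / q) * eLpNorm f (ENNReal.ofReal p) ν := by ring
      _ ≤ _ := by
          gcongr
          rw [ENNReal.le_ofReal_iff_toReal_le (ENNReal.mul_ne_top ?_ ?_) (by positivity)]
          · linarith
          · exact ENNReal.rpow_ne_top_of_nonneg (by simp [hpq.pos.le]) hA
          · exact ENNReal.rpow_ne_top_of_nonneg (by simp [hpq.symm.pos.le]) hB

theorem setLIntegral_ne_top_iff_of_le_of_le {s : Set X} {f g : X → ℝ≥0∞} {c C : ℝ}
    (hc : 0 < c) (hlow : ∀ x ∈ s, ENNReal.ofReal c * g x ≤ f x)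
    (hup : ∀ x ∈ s, f x ≤ ENNReal.ofReal C * g x) (hs : MeasurableSet s) :
    ∫⁻ x in s, f x ∂ν ≠ ∞ ↔ ∫⁻ x in s, g x ∂ν ≠ ∞ := by
  constructor
  · intro hf hg
    have : ENNReal.ofReal c * ∫⁻ x in s, g x ∂ν ≤ ∫⁻ x in s, f x ∂ν := by
      rw [← lintegral_const_mul' _ _ ENNReal.ofReal_ne_top]
      exact setLIntegral_mono' hs hlow
    rw [hg, ENNReal.mul_top (by simpa using hc)] at this
    exact hf (top_le_iff.mp this)
  · intro hg
    refine ne_top_of_le_ne_top (ENNReal.mul_ne_top (ENNReal.ofReal_ne_top (r := C)) hg) ?_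
    rw [← lintegral_const_mul' _ _ ENNReal.ofReal_ne_top]
    exact setLIntegral_mono' hs hup

theorem setLIntegral_Ioc_zero_one_ofReal_rpow_ne_top_iff {τ : ℝ} :
    ∫⁻ t in Ioc (0 : ℝ) 1, ENNReal.ofReal (t ^ τ) ≠ ∞ ↔ -1 < τ := by
  rw [← setLIntegral_congr Ioo_ae_eq_Ioc, lintegral_ofReal_ne_top_iff_integrable
    (measurable_id'.pow_const τ).aestronglyMeasurable
    ((ae_restrict_iff' measurableSet_Ioo).mpr (ae_of_all _ fun t ht => rpow_nonneg ht.1.le τ))]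
  exact intervalIntegral.integrableOn_Ioo_rpow_iff one_pos

end MeasureTheory

section JacobiWeight

variable {α β : ℝ}

theorem measurable_Δj : Measurable (Δj α β) := by
  unfold Δj
  fun_prop

theorem Δj_pos {t : ℝ} (ht : 0 < t) : 0 < Δj α β t :=
  mul_pos (rpow_pos_of_pos (by simpa using sinh_pos_iff.mpr ht) _)
    (rpow_pos_of_pos (by positivity) _)

theorem sinh_le_exp_one_mul {t : ℝ} (ht0 : 0 ≤ t) (ht1 : t ≤ 1) : sinh t ≤ exp 1 * t := by
  -- `2 sinh t = exp t * (1 - exp (-2t)) ≤ exp t * 2t`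
  have hexp : exp t * exp (-(2 * t)) = exp (-t) := by rw [← exp_add]; ring_nf
  have h1 : 1 - 2 * t ≤ exp (-(2 * t)) := by linarith [add_one_le_exp (-(2 * t))]
  have h2 : exp t ≤ exp 1 := exp_le_exp.mpr ht1
  rw [sinh_eq, ← hexp]
  nlinarith [exp_pos t]

theorem le_Δj (hα : -(1 / 2) ≤ α) (hβ : -(1 / 2) ≤ β) {t : ℝ} (ht : 0 ≤ t) :
    2 ^ (2 * α + 1) * 2 ^ (2 * β + 1) * t ^ (2 * α + 1) ≤ Δj α β t := by
  have hsinh : (2 * t) ^ (2 * α + 1) ≤ (2 * sinh t) ^ (2 * α + 1) :=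
    rpow_le_rpow (by positivity) (by linarith [self_le_sinh_iff.mpr ht]) (by linarith)
  have hcosh : (2 : ℝ) ^ (2 * β + 1) ≤ (2 * cosh t) ^ (2 * β + 1) :=
    rpow_le_rpow (by norm_num) (by linarith [one_le_cosh t]) (by linarith)
  rw [Δj, mul_right_comm, ← mul_rpow zero_le_two ht]
  gcongr

theorem Δj_le (hα : -(1 / 2) ≤ α) (hβ : -(1 / 2) ≤ β) {t : ℝ} (ht0 : 0 ≤ t) (ht1 : t ≤ 1) :
    Δj α β t ≤ (2 * exp 1) ^ (2 * α + 1) * (2 * cosh 1) ^ (2 * β + 1) * t ^ (2 * α + 1) := by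
  have hsinh : (2 * sinh t) ^ (2 * α + 1) ≤ (2 * exp 1 * t) ^ (2 * α + 1) :=
    rpow_le_rpow (by linarith [sinh_nonneg_iff.mpr ht0])
      (by linarith [sinh_le_exp_one_mul ht0 ht1]) (by linarith)
  have hcosh : (2 * cosh t) ^ (2 * β + 1) ≤ (2 * cosh 1) ^ (2 * β + 1) :=
    rpow_le_rpow (by positivity)
      (by linarith [cosh_le_cosh.mpr (show |t| ≤ |1| by simpa [abs_of_nonneg ht0] using ht1)])
      (by linarith)
  rw [Δj, mul_right_comm _ _ (t ^ _), ← mul_rpow (by positivity) ht0]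
  gcongr

theorem setLIntegral_μj {F : ℝ → ℝ≥0∞} (hF : Measurable F) {s : Set ℝ} (hs : MeasurableSet s) :
    ∫⁻ t in s, F t ∂μj α β = ∫⁻ t in s, ENNReal.ofReal (Δj α β t) * F t :=
  setLIntegral_withDensity_eq_setLIntegral_mul _ measurable_Δj.ennreal_ofReal hF hs

theorem setLIntegral_Ioc_zero_one_ofReal_rpow_μj_ne_top_iff (hα : -(1 / 2) ≤ α)
    (hβ : -(1 / 2) ≤ β) (σ : ℝ) :
    ∫⁻ t in Ioc (0 : ℝ) 1, ENNReal.ofReal (t ^ σ) ∂μj α β ≠ ∞ ↔ -1 < σ + (2 * α + 1) := by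
  rw [setLIntegral_μj (measurable_id'.pow_const σ).ennreal_ofReal measurableSet_Ioc,
    ← setLIntegral_Ioc_zero_one_ofReal_rpow_ne_top_iff]
  have hweight (c : ℝ) {t : ℝ} (ht : t ∈ Ioc (0 : ℝ) 1) :
      ENNReal.ofReal c * ENNReal.ofReal (t ^ (σ + (2 * α + 1))) =
        ENNReal.ofReal (c * t ^ (2 * α + 1) * t ^ σ) := by
    rw [← ENNReal.ofReal_mul' (rpow_nonneg ht.1.le _), rpow_add ht.1]
    ring_nf
  refine setLIntegral_ne_top_iff_of_le_of_le (c := 2 ^ (2 * α + 1) * 2 ^ (2 * β + 1))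
    (C := (2 * exp 1) ^ (2 * α + 1) * (2 * cosh 1) ^ (2 * β + 1)) (by positivity)
    (fun t ht => ?_) (fun t ht => ?_) measurableSet_Ioc
  · rw [hweight _ ht, ← ENNReal.ofReal_mul (Δj_pos ht.1).le]
    gcongr
    · exact rpow_nonneg ht.1.le σ
    · exact le_Δj hα hβ ht.1.le
  · rw [hweight _ ht, ← ENNReal.ofReal_mul (Δj_pos ht.1).le]
    gcongr
    · exact rpow_nonneg ht.1.le σ
    · exact Δj_le hα hβ ht.1.le ht.2

theorem setLIntegral_Ioc_zero_one_ofReal_rpow_rpow_μj_ne_top_iff (hα : -(1 / 2) < α)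
    (hβ : -(1 / 2) ≤ β) {r : ℝ} (hr : 0 ≤ r) :
    ∫⁻ t in Ioc (0 : ℝ) 1, ENNReal.ofReal (t ^ (-(α + 1 / 2))) ^ r ∂μj α β ≠ ∞ ↔
      r < (4 * α + 4) / (2 * α + 1) := by
  rw [← setLIntegral_congr_fun measurableSet_Ioc fun t ht => by
      rw [ENNReal.ofReal_rpow_of_nonneg (rpow_nonneg ht.1.le _) hr, ← rpow_mul ht.1.le],
    setLIntegral_Ioc_zero_one_ofReal_rpow_μj_ne_top_iff hα.le hβ, lt_div_iff₀ (by linarith)]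
  constructor <;> intro h <;> linarith

theorem μj_Ioc_zero_one_ne_top (hα : -(1 / 2) ≤ α) (hβ : -(1 / 2) ≤ β) :
    μj α β (Ioc 0 1) ≠ ∞ := by
  simpa using (setLIntegral_Ioc_zero_one_ofReal_rpow_μj_ne_top_iff hα hβ 0).mpr (by linarith)

theorem μj_Ioc_zero_one_ne_zero : μj α β (Ioc 0 1) ≠ 0 := by
  rw [μj, withDensity_apply _ measurableSet_Ioc]
  refine lintegral_ne_zero_of_ae_pos (by simp) measurable_Δj.ennreal_ofReal.aemeasurable ?_
  filter_upwards [ae_restrict_mem measurableSet_Ioc] with t ht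
  exact ENNReal.ofReal_pos.mpr (Δj_pos ht.1)

end JacobiWeight

theorem stmt10 (α β : ℝ) (hβα : β < α) (hβ : -(1/2 : ℝ) < β) (p : ℝ) (hp : 1 < p) :
    (∃ C : ℝ, 0 < C ∧
        ∀ f : ℝ → ℝ,
          MemLp f (ENNReal.ofReal p) ((μj α β).restrict (Set.Ioc 0 1)) →
          (∫⁻ t in Set.Ioc (0 : ℝ) 1,
              (ENNReal.ofReal (t ^ (-(α + 1/2))) *
                  ∫⁻ r in Set.Ioc (0 : ℝ) 1,
                    ENNReal.ofReal (r ^ (-(α + 1/2)) * |f r|) ∂(μj α β)) ^ p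
              ∂(μj α β)) ^ (1 / p) ≤
            ENNReal.ofReal C *
              eLpNorm f (ENNReal.ofReal p) ((μj α β).restrict (Set.Ioc 0 1))) ↔
      ((4 * α + 4) / (2 * α + 3) < p ∧ p < (4 * α + 4) / (2 * α + 1)) := by
  have hα : -(1 / 2) < α := by linarith
  set q := p.conjExponent
  have hpq : p.HolderConjugate q := .conjExponent hp
  have hp₁p₀ : ((4 * α + 4) / (2 * α + 1)).HolderConjugate ((4 * α + 4) / (2 * α + 3)) := by
    have := Real.HolderConjugate.inv_inv (a := (2 * α + 1) / (4 * α + 4))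
      (b := (2 * α + 3) / (4 * α + 4)) (by bound) (by bound)
      (by rw [← add_div, div_eq_one_iff_eq (by linarith)]; ring)
    rwa [inv_div, inv_div] at this
  set G : ℝ → ℝ≥0∞ := fun t => ENNReal.ofReal (t ^ (-(α + 1 / 2)))
  have : IsFiniteMeasure ((μj α β).restrict (Ioc 0 1)) :=
    isFiniteMeasure_restrict.mpr (μj_Ioc_zero_one_ne_top hα.le hβ.le)
  have hI (f : ℝ → ℝ) :
      ∫⁻ r in Ioc (0 : ℝ) 1, ENNReal.ofReal (r ^ (-(α + 1 / 2)) * |f r|) ∂μj α β =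
        ∫⁻ r in Ioc (0 : ℝ) 1, G r * ENNReal.ofReal |f r| ∂μj α β :=
    setLIntegral_congr_fun measurableSet_Ioc fun r hr => ENNReal.ofReal_mul (rpow_nonneg hr.1.le _)
  simp_rw [hI]
  refine (exists_bound_rankOne_iff (by simpa using μj_Ioc_zero_one_ne_zero) hpq
    (measurable_id'.pow_const _).ennreal_ofReal ((ae_restrict_iff' measurableSet_Ioc).mpr
      (ae_of_all _ fun t ht => ENNReal.ofReal_pos.mpr (rpow_pos_of_pos ht.1 _)))).trans ?_
  rw [setLIntegral_Ioc_zero_one_ofReal_rpow_rpow_μj_ne_top_iff hα hβ.le hpq.nonneg,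
    setLIntegral_Ioc_zero_one_ofReal_rpow_rpow_μj_ne_top_iff hα hβ.le hpq.symm.nonneg,
    hpq.lt_iff_lt hp₁p₀, and_comm]
end
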